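/- arXiv:2508.10111 — 7 statements merged into one kernel-verified Lean document; each statement's English description precedes it below -/
import Mathlib

section
/- Let G = (V, Σ, P, S) be a CFG in C2F⁺ᵉ form (productions of shape A → σ, A → ε, A → B, A → BC) and D = (Q, Σ, δ, q₀, F) a DFA. Define the triple grammar G∩ with nonterminals ⟨p,A,q⟩ for p,q ∈ Q, A ∈ V and productions: (1) ⟨p,A,q⟩ → σ whenever A → σ ∈ P and δ(p,σ) = q; (2) ⟨p,A,p⟩ → ε whenever A → ε ∈ P; (3) ⟨p,A,r⟩ → ⟨p,B,q⟩⟨q,C,r⟩ whenever A → BC ∈ P, for all p,q,r ∈ Q; (4) ⟨p,A,q⟩ → ⟨p,B,q⟩ whenever A → B ∈ P. Then for all p,q ∈ Q and A ∈ V, the language generated from ⟨p,A,q⟩ equals L(A) ∩ {w | δ*(p,w) = q}. -/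
/-- A context-free grammar in C2F⁺ᵉ form: productions of shape
`A → σ`, `A → ε`, `A → B`, `A → BC`. -/
structure C2F (N T : Type) where
  prodTerm : N → T → Prop
  prodEps : N → Prop
  prodUnit : N → N → Prop
  prodBin : N → N → N → Prop

namespace C2F

/-- `G.Derives A w` : the terminal word `w` is derivable from nonterminal `A`. -/
inductive Derives {N T : Type} (G : C2F N T) : N → List T → Prop
  | term {A : N} {σ : T} : G.prodTerm A σ → Derives G A [σ]
  | eps {A : N} : G.prodEps A → Derives G A []
  | unit {A B : N} {w : List T} : G.prodUnit A B → Derives G B w → Derives G A w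
  | bin {A B C : N} {u v : List T} : G.prodBin A B C → Derives G B u → Derives G C v →
      Derives G A (u ++ v)

end C2F

/-- Derivability from the nonterminal `⟨p, A, q⟩` of the triple intersection grammar of a
C2F⁺ᵉ grammar `G` and a DFA `D`. -/
inductive TripleDerives {N T Q : Type} (G : C2F N T) (D : DFA T Q) : Q → N → Q → List T → Prop
  | term {p q : Q} {A : N} {σ : T} : G.prodTerm A σ → D.step p σ = q →
      TripleDerives G D p A q [σ]
  | eps {p : Q} {A : N} : G.prodEps A → TripleDerives G D p A p []
  | unit {p q : Q} {A B : N} {w : List T} : G.prodUnit A B → TripleDerives G D p B q w →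
      TripleDerives G D p A q w
  | bin {p q r : Q} {A B C : N} {u v : List T} : G.prodBin A B C →
      TripleDerives G D p B q u → TripleDerives G D q C r v →
      TripleDerives G D p A r (u ++ v)

/-! Both inclusions are inductions on derivations: projecting a triple derivation to its middle
components gives a derivation in `G`, and conversely a derivation of `w` from `A` lifts, for every
start state `p`, to a triple derivation from `⟨p, A, δ*(p, w)⟩`, the states being those the DFA
passes through when reading the successive subwords. -/

variable {N T Q : Type} {G : C2F N T} {D : DFA T Q}

theorem TripleDerives.derives_and_evalFrom {p q : Q} {A : N} {w : List T}
    (h : TripleDerives G D p A q w) : G.Derives A w ∧ D.evalFrom p w = q := by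
  induction h with
  | term hA hstep => exact ⟨.term hA, hstep⟩
  | eps hA => exact ⟨.eps hA, rfl⟩
  | unit hA _ ih => exact ⟨.unit hA ih.1, ih.2⟩
  | bin hA _ _ ihB ihC =>
    refine ⟨.bin hA ihB.1 ihC.1, ?_⟩
    rw [DFA.evalFrom_of_append, ihB.2, ihC.2]

theorem C2F.Derives.tripleDerives_evalFrom {A : N} {w : List T} (h : G.Derives A w) (p : Q) :
    TripleDerives G D p A (D.evalFrom p w) w := by
  induction h generalizing p with
  | term hA => exact .term hA rfl
  | eps hA => exact .eps hA
  | unit hA _ ih => exact .unit hA (ih p)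
  | bin hA _ _ ihB ihC =>
    rw [DFA.evalFrom_of_append]
    exact .bin hA (ihB p) (ihC _)

/-- the language generated from `⟨p,A,q⟩` in the triple grammar equals
`L(A) ∩ {w | δ*(p,w) = q}`. -/
theorem triple_language_eq {N T Q : Type} (G : C2F N T) (D : DFA T Q) :
    ∀ (p q : Q) (A : N),
      {w : List T | TripleDerives G D p A q w} =
        {w : List T | G.Derives A w} ∩ {w : List T | D.evalFrom p w = q} := by
  intro p q A
  ext w
  constructor
  · exact TripleDerives.derives_and_evalFrom
  · rintro ⟨hA, rfl⟩
    exact hA.tripleDerives_evalFrom p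
end

section
/- With the triple grammar construction as defined, for all p,q ∈ Q and A ∈ V: if w is derivable from ⟨p,A,q⟩ in the intersection grammar, then w is derivable from A in G and δ*(p,w) = q. -/
namespace TripleDerives

variable {N T Q : Type} {G : C2F N T} {D : DFA T Q}

theorem derives {p q : Q} {A : N} {w : List T} (h : TripleDerives G D p A q w) :
    G.Derives A w := by
  induction h with
  | term hA _ => exact .term hA
  | eps hA => exact .eps hA
  | unit hAB _ ihB => exact .unit hAB ihB
  | bin hABC _ _ ihB ihC => exact .bin hABC ihB ihC

theorem evalFrom_eq {p q : Q} {A : N} {w : List T} (h : TripleDerives G D p A q w) :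
    D.evalFrom p w = q := by
  induction h with
  | term _ hstep => exact hstep
  | eps _ => rfl
  | unit _ _ ih => exact ih
  | bin _ _ _ ihB ihC => rw [DFA.evalFrom_of_append, ihB, ihC]

end TripleDerives

/-- soundness of the triple construction. -/
theorem triple_sound {N T Q : Type} (G : C2F N T) (D : DFA T Q) :
    ∀ (p q : Q) (A : N) (w : List T),
      TripleDerives G D p A q w → G.Derives A w ∧ D.evalFrom p w = q :=
  fun _ _ _ _ h => ⟨h.derives, h.evalFrom_eq⟩
end

section
/- With the triple grammar construction as defined, for all p,q ∈ Q and A ∈ V: if w is derivable from A in G and δ*(p,w) = q, then w is derivable from ⟨p,A,q⟩ in the intersection grammar. -/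
theorem DFA.evalFrom_append {T Q : Type*} (D : DFA T Q) (p : Q) (u v : List T) :
    D.evalFrom p (u ++ v) = D.evalFrom (D.evalFrom p u) v :=
  List.foldl_append

/-- For a rule `A → BC` splitting `w = u ++ v`, the middle state is `δ*(p, u)`. -/
theorem TripleDerives.of_derives {N T Q : Type} {G : C2F N T} (D : DFA T Q) {A : N}
    {w : List T} (h : G.Derives A w) (p : Q) : TripleDerives G D p A (D.evalFrom p w) w := by
  induction h generalizing p with
  | term hA => exact .term hA rfl
  | eps hA => exact .eps hA
  | unit hAB _ ih => exact .unit hAB (ih p)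
  | bin hABC _ _ ihB ihC =>
    rw [DFA.evalFrom_append]
    exact .bin hABC (ihB p) (ihC _)

/-- completeness of the triple construction. -/
theorem triple_complete {N T Q : Type} (G : C2F N T) (D : DFA T Q) :
    ∀ (p q : Q) (A : N) (w : List T),
      G.Derives A w → D.evalFrom p w = q → TripleDerives G D p A q w := by
  rintro p _ A w h rfl
  exact .of_derives D h p
end

section
/- If ε is derivable from nonterminal ⟨p,A,q⟩ in the intersection grammar (triple construction of a C2F⁺ᵉ CFG with a DFA), then p = q. -/
theorem TripleDerives.evalFrom_eq_s6 {N T Q : Type} {G : C2F N T} {D : DFA T Q} {p q : Q} {A : N}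
    {w : List T} (h : TripleDerives G D p A q w) : D.evalFrom p w = q := by
  induction h with
  | term _ hstep => rwa [DFA.evalFrom_singleton]
  | eps _ => exact DFA.evalFrom_nil D _
  | unit _ _ ih => exact ih
  | bin _ _ _ ihB ihC => rw [DFA.evalFrom_of_append, ihB, ihC]

/-- if `ε` is derivable from `⟨p,A,q⟩` in the intersection grammar then `p = q`. -/
theorem triple_eps_eq {N T Q : Type} (G : C2F N T) (D : DFA T Q) (p q : Q) (A : N)
    (h : TripleDerives G D p A q []) : p = q :=
  (D.evalFrom_nil p).symm.trans h.evalFrom_eq_s6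
end

section
/- Let G be a CFG and suppose nonterminal B ≠ A appears in exactly one production A → αBβ of G, and B has a single production B → γ where γ contains no occurrence of B or A. Let G' be the grammar obtained by removing B and its production and replacing A → αBβ with A → αγβ. Then L(G') = L(G). -/
/-!
Every `G'`-step is a `G`-derivation: the new rule `A → αγβ` is the two steps
`A → αBβ → αγβ`.
Conversely, substituting `γ` for every occurrence of `B` maps `G`-derivations to
`G'`-derivations: it sends `A → αBβ` to the new rule, `B → γ` to the trivial derivation
`γ ⇒* γ`, and fixes every other rule, the start symbol and all terminal words.
-/

namespace ContextFreeGrammar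

variable {T : Type}

theorem derives_input_output {g : ContextFreeGrammar T} {r : ContextFreeRule T g.NT}
    (hr : r ∈ g.rules) : g.Derives [.nonterminal r.input] r.output :=
  Produces.single ⟨r, hr, ContextFreeRule.Rewrites.input_output⟩

theorem Derives.map {g₁ g₂ : ContextFreeGrammar T}
    {f : List (Symbol T g₁.NT) → List (Symbol T g₂.NT)}
    (hf : ∀ x y, f (x ++ y) = f x ++ f y)
    (hrules : ∀ r ∈ g₁.rules, g₂.Derives (f [.nonterminal r.input]) (f r.output))
    {u v : List (Symbol T g₁.NT)} (huv : g₁.Derives u v) : g₂.Derives (f u) (f v) := by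
  induction huv with
  | refl => rfl
  | tail _ hstep ih =>
    obtain ⟨r, hr, hrw⟩ := hstep
    obtain ⟨p, q, rfl, rfl⟩ := hrw.exists_parts
    refine ih.trans ?_
    simp only [hf, List.append_assoc]
    exact ((hrules r hr).append_right _).append_left _

theorem language_le_of_map {g₁ g₂ : ContextFreeGrammar T}
    {f : List (Symbol T g₁.NT) → List (Symbol T g₂.NT)}
    (hf : ∀ x y, f (x ++ y) = f x ++ f y)
    (hrules : ∀ r ∈ g₁.rules, g₂.Derives (f [.nonterminal r.input]) (f r.output))
    (hinitial : f [.nonterminal g₁.initial] = [.nonterminal g₂.initial])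
    (hterminal : ∀ w : List T, f (w.map .terminal) = w.map .terminal) :
    g₁.language ≤ g₂.language := by
  intro w hw
  have := Derives.map hf hrules hw
  rwa [hinitial, hterminal] at this

end ContextFreeGrammar

section Substitution

variable {T N : Type}

open Classical in
noncomputable def substNonterminal (B : N) (γ u : List (Symbol T N)) : List (Symbol T N) :=
  u.flatMap fun s => if s = .nonterminal B then γ else [s]

@[simp]
theorem substNonterminal_append (B : N) (γ u v : List (Symbol T N)) :
    substNonterminal B γ (u ++ v) = substNonterminal B γ u ++ substNonterminal B γ v :=
  List.flatMap_append

@[simp]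
theorem substNonterminal_singleton_self (B : N) (γ : List (Symbol T N)) :
    substNonterminal B γ [.nonterminal B] = γ := by
  simp [substNonterminal]

theorem substNonterminal_of_not_mem {B : N} (γ : List (Symbol T N)) {u : List (Symbol T N)}
    (hu : Symbol.nonterminal B ∉ u) : substNonterminal B γ u = u := by
  classical
  induction u with
  | nil => rfl
  | cons s u ih =>
    obtain ⟨hs, hu⟩ := List.ne_and_not_mem_of_not_mem_cons hu
    simp only [substNonterminal, List.flatMap_cons, if_neg hs.symm] at ih ⊢
    rw [ih hu, List.singleton_append]

end Substitution

namespace ContextFreeGrammar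

variable {T : Type}

abbrev inlineNonterminal (g : ContextFreeGrammar T) [DecidableEq (ContextFreeRule T g.NT)]
    (A B : g.NT) (α β γ : List (Symbol T g.NT)) : ContextFreeGrammar T where
  NT := g.NT
  initial := g.initial
  rules := insert ⟨A, α ++ γ ++ β⟩
    ((g.rules.erase ⟨A, α ++ [.nonterminal B] ++ β⟩).erase ⟨B, γ⟩)

variable (g : ContextFreeGrammar T) [DecidableEq (ContextFreeRule T g.NT)]
  {A B : g.NT} {α β γ : List (Symbol T g.NT)}

theorem language_inlineNonterminal_le
    (hr : ⟨A, α ++ [.nonterminal B] ++ β⟩ ∈ g.rules) (hrB : ⟨B, γ⟩ ∈ g.rules) :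
    (g.inlineNonterminal A B α β γ).language ≤ g.language := by
  refine language_le_of_map (f := id) (fun _ _ => rfl) ?_ rfl (fun _ => rfl)
  intro r hr'
  rcases Finset.mem_insert.mp hr' with rfl | hr'
  · have hγ : g.Derives (α ++ [.nonterminal B] ++ β) (α ++ γ ++ β) :=
      ((derives_input_output hrB).append_left α).append_right β
    exact (derives_input_output hr).trans hγ
  · exact derives_input_output (Finset.mem_of_mem_erase (Finset.mem_of_mem_erase hr'))

theorem derives_substNonterminal_of_mem_rules
    (honly : ∀ r ∈ g.rules, .nonterminal B ∈ r.output →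
      r = ⟨A, α ++ [.nonterminal B] ++ β⟩)
    (hα : .nonterminal B ∉ α) (hβ : .nonterminal B ∉ β)
    (hsingle : ∀ r ∈ g.rules, r.input = B → r = ⟨B, γ⟩) (hγB : .nonterminal B ∉ γ)
    {r : ContextFreeRule T g.NT} (hr : r ∈ g.rules) :
    (g.inlineNonterminal A B α β γ).Derives (substNonterminal B γ [.nonterminal r.input])
      (substNonterminal B γ r.output) := by
  by_cases hr_B : r = ⟨B, γ⟩
  · subst hr_B
    rw [substNonterminal_singleton_self, substNonterminal_of_not_mem γ hγB]
  have hinput : (.nonterminal B : Symbol T g.NT) ∉ [.nonterminal r.input] := by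
    simpa using fun h => hr_B (hsingle r hr h.symm)
  rw [substNonterminal_of_not_mem γ hinput]
  by_cases hr_A : r = ⟨A, α ++ [.nonterminal B] ++ β⟩
  · subst hr_A
    simp only [substNonterminal_append, substNonterminal_singleton_self,
      substNonterminal_of_not_mem γ hα, substNonterminal_of_not_mem γ hβ]
    exact derives_input_output (g := g.inlineNonterminal A B α β γ)
      (Finset.mem_insert_self _ _)
  · rw [substNonterminal_of_not_mem γ fun h => hr_A (honly r hr h)]
    exact derives_input_output <| Finset.mem_insert_of_mem <|
      Finset.mem_erase.mpr ⟨hr_B, Finset.mem_erase.mpr ⟨hr_A, hr⟩⟩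

theorem le_language_inlineNonterminal (hBS : g.initial ≠ B)
    (honly : ∀ r ∈ g.rules, .nonterminal B ∈ r.output →
      r = ⟨A, α ++ [.nonterminal B] ++ β⟩)
    (hα : .nonterminal B ∉ α) (hβ : .nonterminal B ∉ β)
    (hsingle : ∀ r ∈ g.rules, r.input = B → r = ⟨B, γ⟩) (hγB : .nonterminal B ∉ γ) :
    g.language ≤ (g.inlineNonterminal A B α β γ).language :=
  language_le_of_map (f := substNonterminal B γ) (substNonterminal_append B γ)
    (fun _ => derives_substNonterminal_of_mem_rules g honly hα hβ hsingle hγB)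
    (substNonterminal_of_not_mem γ (by simpa using hBS.symm))
    (fun _ => substNonterminal_of_not_mem γ (by simp))

end ContextFreeGrammar

open Symbol in
theorem inline_elimination_general {T : Type} (g : ContextFreeGrammar T)
    [DecidableEq (ContextFreeRule T g.NT)]
    (A B : g.NT) (α β γ : List (Symbol T g.NT))
    (hBS : g.initial ≠ B)
    (hr : (⟨A, α ++ [Symbol.nonterminal B] ++ β⟩ : ContextFreeRule T g.NT) ∈ g.rules)
    (hrB : (⟨B, γ⟩ : ContextFreeRule T g.NT) ∈ g.rules)
    -- `B` occurs on a right-hand side only in the rule `A → αBβ`, and only once there: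
    (honly : ∀ r' ∈ g.rules, Symbol.nonterminal B ∈ r'.output →
      r' = (⟨A, α ++ [Symbol.nonterminal B] ++ β⟩ : ContextFreeRule T g.NT))
    (hα : Symbol.nonterminal B ∉ α) (hβ : Symbol.nonterminal B ∉ β)
    -- `B → γ` is the single production of `B`:
    (hsingle : ∀ r' ∈ g.rules, r'.input = B → r' = (⟨B, γ⟩ : ContextFreeRule T g.NT))
    -- `γ` contains no occurrence of `B` or `A`:
    (hγB : Symbol.nonterminal B ∉ γ) :
    (ContextFreeGrammar.mk g.NT g.initial
        (insert (⟨A, α ++ γ ++ β⟩ : ContextFreeRule T g.NT)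
          ((g.rules.erase ⟨A, α ++ [Symbol.nonterminal B] ++ β⟩).erase ⟨B, γ⟩))).language =
      g.language :=
  le_antisymm (g.language_inlineNonterminal_le hr hrB)
    (g.le_language_inlineNonterminal hBS honly hα hβ hsingle hγB)

open Symbol in
/-- inlinable nonterminal elimination. If `B ≠ A` occurs in exactly one
production `A → αBβ`, and `B` has the single production `B → γ` where `γ` contains no `B` or
`A`, then replacing these by `A → αγβ` and deleting `B`'s production preserves the language. -/
theorem inline_elimination {T : Type} (g : ContextFreeGrammar T)
    [DecidableEq (ContextFreeRule T g.NT)]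
    (A B : g.NT) (α β γ : List (Symbol T g.NT))
    (hBA : B ≠ A) (hBS : g.initial ≠ B)
    (hr : (⟨A, α ++ [Symbol.nonterminal B] ++ β⟩ : ContextFreeRule T g.NT) ∈ g.rules)
    (hrB : (⟨B, γ⟩ : ContextFreeRule T g.NT) ∈ g.rules)
    -- `B` occurs on a right-hand side only in the rule `A → αBβ`, and only once there:
    (honly : ∀ r' ∈ g.rules, Symbol.nonterminal B ∈ r'.output →
      r' = (⟨A, α ++ [Symbol.nonterminal B] ++ β⟩ : ContextFreeRule T g.NT))
    (hα : Symbol.nonterminal B ∉ α) (hβ : Symbol.nonterminal B ∉ β)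
    -- `B → γ` is the single production of `B`:
    (hsingle : ∀ r' ∈ g.rules, r'.input = B → r' = (⟨B, γ⟩ : ContextFreeRule T g.NT))
    -- `γ` contains no occurrence of `B` or `A`:
    (hγB : Symbol.nonterminal B ∉ γ) (hγA : Symbol.nonterminal A ∉ γ) :
    (ContextFreeGrammar.mk g.NT g.initial
        (insert (⟨A, α ++ γ ++ β⟩ : ContextFreeRule T g.NT)
          ((g.rules.erase ⟨A, α ++ [Symbol.nonterminal B] ++ β⟩).erase ⟨B, γ⟩))).language =
      g.language :=
  inline_elimination_general g A B α β γ hBS hr hrB honly hα hβ hsingle hγB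
end

section
/- The intersection of the language of a CFG G (in C2F⁺ᵉ form) with the language of a DFA D is nonempty if and only if some triple ⟨q₀, S, f⟩ with f ∈ F is a generating nonterminal of the intersection grammar. -/
theorem tripleDerives_iff {N T Q : Type} {G : C2F N T} {D : DFA T Q} {p q : Q} {A : N}
    {w : List T} : TripleDerives G D p A q w ↔ G.Derives A w ∧ D.evalFrom p w = q := by
  constructor
  · intro h
    induction h with
    | term h hstep => exact ⟨.term h, hstep⟩
    | eps h => exact ⟨.eps h, rfl⟩
    | unit h _ ih => exact ⟨.unit h ih.1, ih.2⟩
    | bin h _ _ ihB ihC =>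
      refine ⟨.bin h ihB.1 ihC.1, ?_⟩
      rw [DFA.evalFrom_of_append, ihB.2, ihC.2]
  · rintro ⟨h, rfl⟩
    induction h generalizing p with
    | term h => exact .term h rfl
    | eps h => exact .eps h
    | unit h _ ih => exact .unit h ih
    | bin h _ _ ihB ihC =>
      rw [DFA.evalFrom_of_append]
      exact .bin h ihB ihC

/-- `L(G) ∩ L(D)` is nonempty iff some triple `⟨q₀,S,f⟩` with `f ∈ F` is a
generating nonterminal of the intersection grammar. -/
theorem intersection_nonempty_iff_generating {N T Q : Type} (G : C2F N T) (D : DFA T Q)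
    (S : N) :
    (∃ w : List T, G.Derives S w ∧ w ∈ D.accepts) ↔
      ∃ f ∈ D.accept, ∃ w : List T, TripleDerives G D D.start S f w := by
  constructor
  · rintro ⟨w, hw, hacc⟩
    exact ⟨D.eval w, hacc, w, tripleDerives_iff.mpr ⟨hw, rfl⟩⟩
  · rintro ⟨f, hf, w, h⟩
    obtain ⟨hw, rfl⟩ := tripleDerives_iff.mp h
    exact ⟨w, hw, hf⟩
end

section
/- If a CFG G is in Chomsky normal form (productions only of shapes A → σ and A → BC), then the worklist algorithm that (i) initializes a set G of triples ⟨p,A,q⟩ for all A → σ with δ(p,σ)=q, and (ii) repeatedly, for each triple ⟨y,X,z⟩ popped from the worklist, adds ⟨y,A,q⟩ whenever A → XC ∈ P and ⟨z,C,q⟩ ∈ G, adds ⟨q,A,z⟩ whenever A → BX ∈ P and ⟨q,B,y⟩ ∈ G, terminates, and upon termination the set G equals exactly the set of triples ⟨p,A,q⟩ such that some word w is derivable from A in the CFG with δ*(p,w) = q. -/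
/-- One round of the worklist algorithm: keep everything already found, add all triples
obtained from terminal rules (initialization) and from binary rules with matching
intermediate states. -/
def worklistStep {N T Q : Type} (G : C2F N T) (D : DFA T Q)
    (X : Set (Q × N × Q)) : Set (Q × N × Q) :=
  X ∪ {t | ∃ σ : T, G.prodTerm t.2.1 σ ∧ D.step t.1 σ = t.2.2}
    ∪ {t | ∃ (B C : N) (q : Q), G.prodBin t.2.1 B C ∧ (t.1, B, q) ∈ X ∧ (q, C, t.2.2) ∈ X}

theorem exists_isFixedPt_iterate_of_le_map {α : Type*} [PartialOrder α] [WellFoundedGT α]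
    {f : α → α} (hf : ∀ x, x ≤ f x) (a : α) : ∃ n, Function.IsFixedPt f (f^[n] a) := by
  have hmono : Monotone fun n ↦ f^[n] a :=
    monotone_nat_of_le_succ fun n ↦ by
      simpa only [Function.iterate_succ_apply'] using hf (f^[n] a)
  obtain ⟨n, hn⟩ := WellFoundedGT.monotone_chain_condition ⟨_, hmono⟩
  exact ⟨n, (Function.iterate_succ_apply' f n a).symm.trans (hn (n + 1) n.le_succ).symm⟩

section Worklist

variable {N T Q : Type} (G : C2F N T) (D : DFA T Q)

def derivableTriples : Set (Q × N × Q) :=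
  {t | ∃ w : List T, G.Derives t.2.1 w ∧ D.evalFrom t.1 w = t.2.2}

theorem subset_worklistStep (X : Set (Q × N × Q)) : X ⊆ worklistStep G D X :=
  Set.subset_union_left.trans Set.subset_union_left

theorem exists_worklistStep_iterate_fixed [Finite N] [Finite Q] :
    ∃ n, worklistStep G D ((worklistStep G D)^[n] ∅) = (worklistStep G D)^[n] ∅ :=
  exists_isFixedPt_iterate_of_le_map (subset_worklistStep G D) ∅

theorem worklistStep_subset_derivableTriples {X : Set (Q × N × Q)}
    (hX : X ⊆ derivableTriples G D) : worklistStep G D X ⊆ derivableTriples G D := by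
  rintro ⟨p, A, q⟩ ((hmem | ⟨σ, hA, hstep⟩) | ⟨B, C, r, hA, hB, hC⟩)
  · exact hX hmem
  · exact ⟨[σ], .term hA, hstep⟩
  · obtain ⟨u, hu, hpr⟩ := hX hB
    obtain ⟨v, hv, hrq⟩ := hX hC
    exact ⟨u ++ v, .bin hA hu hv, by rw [DFA.evalFrom_of_append, hpr, hrq]⟩

theorem iterate_worklistStep_subset_derivableTriples (n : ℕ) :
    (worklistStep G D)^[n] ∅ ⊆ derivableTriples G D :=
  Set.MapsTo.iterate (s := Set.Iic (derivableTriples G D))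
    (fun _ ↦ worklistStep_subset_derivableTriples G D) n (Set.empty_subset _)

variable {G D}

theorem mem_of_worklistStep_eq_of_derives (hEps : ∀ A : N, ¬ G.prodEps A)
    (hUnit : ∀ A B : N, ¬ G.prodUnit A B) {X : Set (Q × N × Q)} (hX : worklistStep G D X = X)
    {A : N} {w : List T} (hw : G.Derives A w) (p : Q) : (p, A, D.evalFrom p w) ∈ X := by
  rw [← hX]
  induction hw generalizing p with
  | @term A σ hA => exact .inl (.inr ⟨σ, hA, (D.evalFrom_singleton p σ).symm⟩)
  | eps hA => exact absurd hA (hEps _)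
  | unit hAB => exact absurd hAB (hUnit _ _)
  | @bin A B C u v hA _ _ ihB ihC =>
    refine .inr ⟨B, C, D.evalFrom p u, hA, hX ▸ ihB p, ?_⟩
    simpa only [DFA.evalFrom_of_append, hX] using ihC (D.evalFrom p u)

theorem derivableTriples_subset_of_worklistStep_eq (hEps : ∀ A : N, ¬ G.prodEps A)
    (hUnit : ∀ A B : N, ¬ G.prodUnit A B) {X : Set (Q × N × Q)} (hX : worklistStep G D X = X) :
    derivableTriples G D ⊆ X := by
  rintro ⟨p, A, q⟩ ⟨w, hw, hq : D.evalFrom p w = q⟩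
  rw [← hq]
  exact mem_of_worklistStep_eq_of_derives hEps hUnit hX hw p

end Worklist

/-- for a CNF grammar (no `ε`- and no unit productions), the worklist algorithm
terminates (the iteration reaches a fixed point after finitely many rounds), and the resulting
set is exactly the set of triples `⟨p,A,q⟩` such that some word `w` is derivable from `A` with
`δ*(p,w) = q`. -/
theorem worklist_correct {N T Q : Type} [Fintype N] [Fintype Q] (G : C2F N T) (D : DFA T Q)
    (hEps : ∀ A : N, ¬ G.prodEps A) (hUnit : ∀ A B : N, ¬ G.prodUnit A B) :
    ∃ n : ℕ, worklistStep G D ((worklistStep G D)^[n] ∅) = (worklistStep G D)^[n] ∅ ∧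
      (worklistStep G D)^[n] ∅ =
        {t : Q × N × Q | ∃ w : List T, G.Derives t.2.1 w ∧ D.evalFrom t.1 w = t.2.2} := by
  obtain ⟨n, hfixed⟩ := exists_worklistStep_iterate_fixed G D
  exact ⟨n, hfixed, (iterate_worklistStep_subset_derivableTriples G D n).antisymm
    (derivableTriples_subset_of_worklistStep_eq hEps hUnit hfixed)⟩
end
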